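/- arXiv:1506.03131 — 8 statements merged into one kernel-verified Lean document; each statement's English description precedes it below -/
import Mathlib

section
/- For real numbers λ₁, λ₂ with 0 < |λ₁| < 1, 0 < |λ₂| < 1, λ₁ ≠ λ₂, and a nonnegative integer S, the doubly infinite sum ∑_{j=-∞}^{∞} λ₁^{|j|} λ₂^{|S-j|} equals λ₁^{S+1}(1-λ₂²)/((λ₁-λ₂)(1-λ₁λ₂)) + λ₂^{S+1}(1-λ₁²)/((λ₂-λ₁)(1-λ₂λ₁)). -/
theorem stmt_0 (l1 l2 : ℝ) (S : ℕ)
    (h1 : 0 < |l1|) (h1' : |l1| < 1) (h2 : 0 < |l2|) (h2' : |l2| < 1) (hne : l1 ≠ l2) :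
    ∑' j : ℤ, l1 ^ j.natAbs * l2 ^ ((S : ℤ) - j).natAbs =
      l1 ^ (S + 1) * (1 - l2 ^ 2) / ((l1 - l2) * (1 - l1 * l2)) +
      l2 ^ (S + 1) * (1 - l1 ^ 2) / ((l2 - l1) * (1 - l2 * l1)) := by
  set f : ℤ → ℝ := fun j => l1 ^ j.natAbs * l2 ^ ((S : ℤ) - j).natAbs with hf
  have hr : |l1 * l2| < 1 := by
    rw [abs_mul]
    nlinarith [abs_nonneg l1, abs_nonneg l2]
  have hr1 : (1 : ℝ) - l1 * l2 ≠ 0 := by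
    have : l1 * l2 < 1 := lt_of_le_of_lt (le_abs_self _) hr
    linarith
  have hgeo : HasSum (fun n : ℕ => (l1 * l2) ^ n) (1 - l1 * l2)⁻¹ :=
    hasSum_geometric_of_abs_lt_one hr
  -- negative part
  have hneg : HasSum (fun n : ℕ => f (-(n + 1))) (l1 * l2 ^ (S + 1) * (1 - l1 * l2)⁻¹) := by
    have := hgeo.mul_left (l1 * l2 ^ (S + 1))
    refine this.congr_fun fun n => ?_
    have e1 : (-((n : ℤ) + 1)).natAbs = n + 1 := by omega
    have e2 : ((S : ℤ) - (-((n : ℤ) + 1))).natAbs = S + n + 1 := by omega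
    simp only [hf, e1, e2]
    ring
  -- shifted positive part
  have hshift : HasSum (fun n : ℕ => f ((n : ℤ) + (S + 1)))
      (l1 ^ (S + 1) * l2 * (1 - l1 * l2)⁻¹) := by
    have := hgeo.mul_left (l1 ^ (S + 1) * l2)
    refine this.congr_fun fun n => ?_
    have e1 : ((n : ℤ) + (S + 1)).natAbs = n + S + 1 := by omega
    have e2 : ((S : ℤ) - ((n : ℤ) + (S + 1))).natAbs = n + 1 := by omega
    simp only [hf, e1, e2]
    ring
  have hshift' : HasSum (fun n : ℕ => f (↑(n + (S + 1))))
      (l1 ^ (S + 1) * l2 * (1 - l1 * l2)⁻¹) := by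
    refine hshift.congr_fun fun n => ?_
    push_cast
    ring_nf
  have hpos : HasSum (fun n : ℕ => f n)
      (l1 ^ (S + 1) * l2 * (1 - l1 * l2)⁻¹ + ∑ i ∈ Finset.range (S + 1), f i) :=
    (hasSum_nat_add_iff (S + 1)).mp hshift'
  have htot : HasSum f
      ((l1 ^ (S + 1) * l2 * (1 - l1 * l2)⁻¹ + ∑ i ∈ Finset.range (S + 1), f i) +
        l1 * l2 ^ (S + 1) * (1 - l1 * l2)⁻¹) :=
    hpos.of_nat_of_neg_add_one hneg
  have hsum : ∑ i ∈ Finset.range (S + 1), f i =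
      ∑ i ∈ Finset.range (S + 1), l1 ^ i * l2 ^ (S + 1 - 1 - i) := by
    refine Finset.sum_congr rfl fun i hi => ?_
    have hiS : i ≤ S := by
      have := Finset.mem_range.mp hi; omega
    have e1 : ((i : ℤ)).natAbs = i := by omega
    have e2 : ((S : ℤ) - (i : ℤ)).natAbs = S + 1 - 1 - i := by omega
    simp only [hf, e1, e2]
  have hgeom2 : (∑ i ∈ Finset.range (S + 1), l1 ^ i * l2 ^ (S + 1 - 1 - i)) * (l1 - l2) =
      l1 ^ (S + 1) - l2 ^ (S + 1) := geom_sum₂_mul l1 l2 (S + 1)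
  have hne' : l1 - l2 ≠ 0 := sub_ne_zero.mpr hne
  have hsum' : ∑ i ∈ Finset.range (S + 1), f i = (l1 ^ (S + 1) - l2 ^ (S + 1)) / (l1 - l2) := by
    rw [hsum, eq_div_iff hne', hgeom2]
  rw [htot.tsum_eq, hsum']
  have hne2 : l2 - l1 ≠ 0 := by intro h; apply hne'; linarith [sub_eq_zero.mp h]
  have hr1' : (1 : ℝ) - l2 * l1 ≠ 0 := by rw [mul_comm]; exact hr1
  field_simp
  ring
end

section
/- For a real number λ with 0 < |λ| < 1 and a nonnegative integer S, the doubly infinite sum ∑_{j=-∞}^{∞} λ^{|j|} λ^{|S-j|} equals λ^S (1 + S + (1-S)λ²)/(1-λ²). -/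
theorem stmt_1 (l : ℝ) (S : ℕ) (h : 0 < |l|) (h' : |l| < 1) :
    ∑' j : ℤ, l ^ j.natAbs * l ^ ((S : ℤ) - j).natAbs =
      l ^ S * (1 + (S : ℝ) + (1 - (S : ℝ)) * l ^ 2) / (1 - l ^ 2) := by
  set f : ℤ → ℝ := fun j => l ^ j.natAbs * l ^ ((S : ℤ) - j).natAbs with hf
  have hl2 : l ^ 2 < 1 := by
    have := sq_abs l
    nlinarith [sq_abs l, sq_nonneg l]
  have hl2' : (0:ℝ) ≤ l ^ 2 := sq_nonneg l
  have hgeo : HasSum (fun n : ℕ => (l ^ 2) ^ n) (1 - l ^ 2)⁻¹ :=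
    hasSum_geometric_of_lt_one hl2' hl2
  have hgeo' : HasSum (fun n : ℕ => l ^ S * l ^ 2 * (l ^ 2) ^ n)
      (l ^ S * l ^ 2 * (1 - l ^ 2)⁻¹) := hgeo.mul_left _
  -- negative part
  have hneg : HasSum (fun n : ℕ => f (-(n + 1)))
      (l ^ S * l ^ 2 * (1 - l ^ 2)⁻¹) := by
    refine hgeo'.congr_fun fun n => ?_
    have h1 : ((-(n + 1) : ℤ)).natAbs = n + 1 := by omega
    have h2 : ((S : ℤ) - (-(n + 1))).natAbs = S + n + 1 := by omega
    simp only [hf, h1, h2]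
    ring
  -- tail of nonnegative part
  have htail : HasSum (fun m : ℕ => f (m + (S + 1)))
      (l ^ S * l ^ 2 * (1 - l ^ 2)⁻¹) := by
    refine hgeo'.congr_fun fun m => ?_
    simp only [hf]
    have h1 : ((m : ℤ) + ((S : ℤ) + 1)).natAbs = m + S + 1 := by omega
    have h2 : ((S : ℤ) - ((m : ℤ) + ((S : ℤ) + 1))).natAbs = m + 1 := by omega
    rw [h1, h2]
    ring
  have hpos : HasSum (fun n : ℕ => f n)
      (l ^ S * l ^ 2 * (1 - l ^ 2)⁻¹ + ∑ i ∈ Finset.range (S + 1), f i) :=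
    (hasSum_nat_add_iff (S + 1)).mp htail
  have hsum : ∑ i ∈ Finset.range (S + 1), f i = (S + 1) * l ^ S := by
    rw [Finset.sum_congr rfl (g := fun _ => l ^ S) fun i hi => ?_]
    · simp [Finset.sum_const, mul_comm]
    · have hi' : i ≤ S := by
        have := Finset.mem_range.mp hi; omega
      have h1 : ((i : ℤ)).natAbs = i := by omega
      have h2 : ((S : ℤ) - i).natAbs = S - i := by omega
      simp only [hf, h1, h2]
      rw [← pow_add]
      congr 1
      omega
  rw [hsum] at hpos
  have htot : HasSum f (l ^ S * l ^ 2 * (1 - l ^ 2)⁻¹ + (S + 1) * l ^ S +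
      (l ^ S * l ^ 2 * (1 - l ^ 2)⁻¹)) := hpos.of_nat_of_neg_add_one hneg
  rw [htot.tsum_eq]
  have hne : (1 : ℝ) - l ^ 2 ≠ 0 := by nlinarith
  field_simp
  ring
end

section
/- For real numbers λ₁, λ₂ with |λ₁| < 1, |λ₂| < 1 and λ₁ ≠ λ₂, integers s₁, s₂, and setting S = |s₁ + s₂|, the limit as n → ∞ of (1/n) ∑_{i₁=1}^{n} ∑_{i₂=1}^{n} λ₁^{|i₁-i₂+s₁|} λ₂^{|i₂-i₁+s₂|} equals λ₁^{S+1}(1-λ₂²)/((λ₁-λ₂)(1-λ₁λ₂)) + λ₂^{S+1}(1-λ₁²)/((λ₂-λ₁)(1-λ₂λ₁)). -/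
/-!
The summand depends only on `k = i₁ - i₂`, through `F k = λ₁ ^ |k + s₁| * λ₂ ^ |s₂ - k|`, which is
absolutely summable over `ℤ`. For such `F`, row `i` of the double sum is a partial sum of
`∑' k, F k` over a window containing `[-m, m]` with `m = min i (n - 1 - i)`, so its error is at most
the sum of two tails of `∑ ‖F k‖`; averaging over the rows, a Cesàro argument makes the error vanish.
The limit `∑' k, F k` is computed by shifting to `∑' k, λ₁ ^ |k| * λ₂ ^ |S - k|` and summing
geometric series.
-/

open Filter Finset Topology

section ToeplitzCesaro

variable {E : Type*} [NormedAddCommGroup E]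

lemma norm_sum_sub_tsum_le_tsum_compl [CompleteSpace E] {ι : Type*} {f : ι → E}
    (hf : Summable (‖f ·‖)) {s t : Finset ι} (hts : t ⊆ s) :
    ‖∑ i ∈ s, f i - ∑' i, f i‖ ≤ ∑' i : {i // i ∉ t}, ‖f i‖ := by
  rw [← (hf.of_norm).sum_add_tsum_subtype_compl s, sub_add_cancel_left, norm_neg]
  calc ‖∑' i : {i // i ∉ s}, f i‖ ≤ ∑' i : {i // i ∉ s}, ‖f i‖ :=
        norm_tsum_le_tsum_norm (hf.subtype _)
    _ ≤ ∑' i : {i // i ∉ t}, ‖f i‖ :=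
        Summable.tsum_le_tsum_of_inj (fun i => ⟨i, fun hi => i.2 (hts hi)⟩)
          (fun _ _ h => Subtype.ext (by simpa using congrArg Subtype.val h)) (fun _ _ => norm_nonneg _)
          (fun _ => le_rfl) (hf.subtype _) (hf.subtype _)

lemma tendsto_tsum_compl_Icc_neg_atTop_zero (g : ℤ → E) :
    Tendsto (fun m : ℕ => ∑' k : {k // k ∉ Icc (-(m : ℤ)) m}, g k) atTop (𝓝 0) := by
  refine (tendsto_tsum_compl_atTop_zero g).comp (tendsto_atTop_finset_of_monotone ?_ ?_)
  · exact fun a b hab => Icc_subset_Icc (by simpa using hab) (by simpa using hab)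
  · exact fun k => ⟨k.natAbs, by simp only [mem_Icc]; omega⟩

variable [CompleteSpace E] {F : ℤ → E}

lemma norm_sum_range_sub_sub_tsum_le (hF : Summable (‖F ·‖)) {n i : ℕ} (hi : i < n) :
    ‖∑ j ∈ range n, F (i - j) - ∑' k, F k‖ ≤
      ∑' k : {k // k ∉ Icc (-(i : ℤ)) i}, ‖F k‖ +
        ∑' k : {k // k ∉ Icc (-((n - 1 - i : ℕ) : ℤ)) (n - 1 - i : ℕ)}, ‖F k‖ := by
  have himage : ∑ j ∈ range n, F (i - j) = ∑ k ∈ (range n).image (fun j : ℕ => (i : ℤ) - j), F k :=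
    (sum_image fun _ _ _ _ h => by simpa using h).symm
  have tail_nonneg (m : ℕ) : 0 ≤ ∑' k : {k // k ∉ Icc (-(m : ℤ)) m}, ‖F k‖ :=
    tsum_nonneg fun _ => norm_nonneg _
  have window (m : ℕ) (hmi : m ≤ i) (hmn : m ≤ n - 1 - i) :
      ‖∑ k ∈ (range n).image (fun j : ℕ => (i : ℤ) - j), F k - ∑' k, F k‖ ≤
        ∑' k : {k // k ∉ Icc (-(m : ℤ)) m}, ‖F k‖ := by
    refine norm_sum_sub_tsum_le_tsum_compl hF fun k hk => ?_
    simp only [mem_Icc, mem_image, mem_range] at hk ⊢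
    exact ⟨(i - k).toNat, by omega, by omega⟩
  rw [himage]
  rcases le_total i (n - 1 - i) with h | h
  · exact (window i le_rfl h).trans (le_add_of_nonneg_right (tail_nonneg _))
  · exact (window _ h le_rfl).trans (le_add_of_nonneg_left (tail_nonneg _))

variable [NormedSpace ℝ E]

theorem tendsto_inv_smul_sum_range_sum_range_sub (hF : Summable (‖F ·‖)) :
    Tendsto (fun n : ℕ => (n : ℝ)⁻¹ • ∑ i ∈ range n, ∑ j ∈ range n, F (i - j)) atTop
      (𝓝 (∑' k, F k)) := by
  set tail : ℕ → ℝ := fun m => ∑' k : {k // k ∉ Icc (-(m : ℤ)) m}, ‖F k‖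
  have bound : ∀ n : ℕ, 1 ≤ n →
      ‖(n : ℝ)⁻¹ • ∑ i ∈ range n, ∑ j ∈ range n, F (i - j) - ∑' k, F k‖ ≤
        2 * ((n : ℝ)⁻¹ * ∑ m ∈ range n, tail m) := by
    intro n hn
    have hn0 : (n : ℝ) ≠ 0 := by positivity
    have hsplit : (n : ℝ)⁻¹ • ∑ i ∈ range n, ∑ j ∈ range n, F (i - j) - ∑' k, F k =
        (n : ℝ)⁻¹ • ∑ i ∈ range n, (∑ j ∈ range n, F (i - j) - ∑' k, F k) := by
      rw [sum_sub_distrib, sum_const, card_range, smul_sub, ← Nat.cast_smul_eq_nsmul ℝ, smul_smul,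
        inv_mul_cancel₀ hn0, one_smul]
    calc _ = (n : ℝ)⁻¹ * ‖∑ i ∈ range n, (∑ j ∈ range n, F (i - j) - ∑' k, F k)‖ := by
          rw [hsplit, norm_smul, norm_inv, Real.norm_natCast]
      _ ≤ (n : ℝ)⁻¹ * ∑ i ∈ range n, (tail i + tail (n - 1 - i)) := by
          gcongr
          exact (norm_sum_le _ _).trans (sum_le_sum fun i hi =>
            norm_sum_range_sub_sub_tsum_le hF (mem_range.mp hi))
      _ = 2 * ((n : ℝ)⁻¹ * ∑ m ∈ range n, tail m) := by
          rw [sum_add_distrib, sum_range_reflect tail n]; ring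
  have hzero : Tendsto (fun n : ℕ => 2 * ((n : ℝ)⁻¹ * ∑ m ∈ range n, tail m)) atTop (𝓝 0) := by
    simpa using ((tendsto_tsum_compl_Icc_neg_atTop_zero (‖F ·‖)).cesaro).const_mul 2
  exact tendsto_iff_norm_sub_tendsto_zero.mpr <| squeeze_zero_norm'
    (by filter_upwards [eventually_ge_atTop 1] with n hn; rw [norm_norm]; exact bound n hn) hzero

end ToeplitzCesaro

lemma summable_pow_natAbs {r : ℝ} (hr : |r| < 1) : Summable fun k : ℤ => r ^ k.natAbs := by
  have h := summable_geometric_of_abs_lt_one hr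
  exact .of_nat_of_neg (by simpa using h) (by simpa using h)

lemma summable_norm_pow_natAbs_add_mul_pow_natAbs_sub {a b : ℝ} (ha : |a| < 1) (hb : |b| ≤ 1)
    (s t : ℤ) : Summable fun k : ℤ => ‖a ^ (k + s).natAbs * b ^ (t - k).natAbs‖ := by
  refine .of_nonneg_of_le (fun _ => norm_nonneg _) (fun k => ?_)
    ((summable_pow_natAbs (r := |a|) (by rwa [abs_abs])).comp_injective (add_left_injective s))
  rw [norm_mul, norm_pow, norm_pow, Real.norm_eq_abs, Real.norm_eq_abs]
  exact mul_le_of_le_one_right (by positivity) (pow_le_one₀ (abs_nonneg b) hb)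

lemma tsum_pow_natAbs_add_mul_pow_natAbs_sub (a b : ℝ) (s t : ℤ) :
    ∑' k : ℤ, a ^ (k + s).natAbs * b ^ (t - k).natAbs =
      ∑' k : ℤ, a ^ k.natAbs * b ^ (|s + t| - k).natAbs := by
  rw [← (Equiv.subRight s).tsum_eq]
  rcases abs_choice (s + t) with h | h <;> rw [h]
  · exact tsum_congr fun k => by
      rw [Equiv.subRight_apply, sub_add_cancel, show t - (k - s) = s + t - k by ring]
  · rw [← (Equiv.neg ℤ).tsum_eq]
    exact tsum_congr fun k => by
      rw [Equiv.subRight_apply, Equiv.neg_apply, sub_add_cancel, Int.natAbs_neg,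
        show -(s + t) - k = -(t - (-k - s)) by ring, Int.natAbs_neg]

/-- Splitting `ℤ` into `k < 0`, `0 ≤ k ≤ S` and `S < k` leaves two geometric series and a finite
geometric sum. -/
theorem tsum_pow_natAbs_mul_pow_natAbs_sub {a b : ℝ} (ha : |a| < 1) (hb : |b| < 1) (hab : a ≠ b)
    (S : ℕ) :
    ∑' k : ℤ, a ^ k.natAbs * b ^ ((S : ℤ) - k).natAbs =
      a ^ (S + 1) * (1 - b ^ 2) / ((a - b) * (1 - a * b)) +
        b ^ (S + 1) * (1 - a ^ 2) / ((b - a) * (1 - b * a)) := by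
  set f : ℤ → ℝ := fun k => a ^ k.natAbs * b ^ ((S : ℤ) - k).natAbs
  have hf : Summable f := by
    simpa using (summable_norm_pow_natAbs_add_mul_pow_natAbs_sub ha hb.le 0 S).of_norm
  have hnat : Summable fun n : ℕ => f n := hf.comp_injective Nat.cast_injective
  have hneg : Summable fun n : ℕ => f (-(n + 1)) := hf.comp_injective fun m n h => by
    simp only [neg_inj] at h; omega
  have hab' : |a * b| < 1 := by
    rw [abs_mul]; exact mul_lt_one_of_nonneg_of_lt_one_left (abs_nonneg a) ha hb.le
  have hgeom (c : ℝ) : ∑' n : ℕ, (a * b) ^ n * c = c / (1 - a * b) := by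
    rw [tsum_mul_right, tsum_geometric_of_abs_lt_one hab', inv_mul_eq_div]
  have head : ∑ k ∈ range (S + 1), f k = (a ^ (S + 1) - b ^ (S + 1)) / (a - b) := by
    rw [eq_div_iff (sub_ne_zero.2 hab), ← geom_sum₂_mul]
    congr 1
    refine sum_congr rfl fun k hk => ?_
    rw [mem_range] at hk
    simp only [f, Int.natAbs_natCast]
    congr 2; omega
  have upper : ∑' n : ℕ, f (n + (S + 1) : ℕ) = a ^ (S + 1) * b / (1 - a * b) := by
    rw [← hgeom]
    refine tsum_congr fun n => ?_
    simp only [f, Int.natAbs_natCast, show ((S : ℤ) - (n + (S + 1) : ℕ)).natAbs = n + 1 by omega]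
    ring
  have lower : ∑' n : ℕ, f (-(n + 1)) = a * b ^ (S + 1) / (1 - a * b) := by
    rw [← hgeom]
    refine tsum_congr fun n => ?_
    simp only [f, show (-((n : ℤ) + 1)).natAbs = n + 1 by omega,
      show ((S : ℤ) - -((n : ℤ) + 1)).natAbs = S + 1 + n by omega]
    ring
  rw [tsum_of_nat_of_neg_add_one hnat hneg, ← hnat.sum_add_tsum_nat_add (S + 1), head, upper, lower]
  have h1 : 1 - a * b ≠ 0 := by
    intro h; rw [show a * b = 1 by linarith, abs_one] at hab'; exact lt_irrefl _ hab'
  have h2 : 1 - b * a ≠ 0 := by rwa [mul_comm]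
  have h3 : a - b ≠ 0 := sub_ne_zero.2 hab
  have h4 : b - a ≠ 0 := sub_ne_zero.2 hab.symm
  field_simp
  ring

theorem stmt_5 (l1 l2 : ℝ) (h1 : |l1| < 1) (h2 : |l2| < 1) (hne : l1 ≠ l2)
    (s1 s2 : ℤ) (S : ℕ) (hS : (S : ℤ) = |s1 + s2|) :
    Filter.Tendsto
      (fun n : ℕ => (1 / (n : ℝ)) *
        ∑ i₁ ∈ Finset.Icc 1 n, ∑ i₂ ∈ Finset.Icc 1 n,
          l1 ^ ((i₁ : ℤ) - (i₂ : ℤ) + s1).natAbs * l2 ^ ((i₂ : ℤ) - (i₁ : ℤ) + s2).natAbs)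
      Filter.atTop
      (nhds (l1 ^ (S + 1) * (1 - l2 ^ 2) / ((l1 - l2) * (1 - l1 * l2)) +
        l2 ^ (S + 1) * (1 - l1 ^ 2) / ((l2 - l1) * (1 - l2 * l1)))) := by
  set F : ℤ → ℝ := fun k => l1 ^ (k + s1).natAbs * l2 ^ (s2 - k).natAbs
  have sum_Icc_one (n : ℕ) (g : ℕ → ℝ) : ∑ i ∈ Icc 1 n, g i = ∑ i ∈ range n, g (i + 1) := by
    rw [range_eq_Ico, ← Ico_add_one_right_eq_Icc, sum_Ico_add' g 0 n 1, zero_add]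
  have hsum (n : ℕ) : ∑ i₁ ∈ Icc 1 n, ∑ i₂ ∈ Icc 1 n,
      l1 ^ ((i₁ : ℤ) - (i₂ : ℤ) + s1).natAbs * l2 ^ ((i₂ : ℤ) - (i₁ : ℤ) + s2).natAbs =
        ∑ i ∈ range n, ∑ j ∈ range n, F (i - j) := by
    simp only [sum_Icc_one, F]
    refine sum_congr rfl fun i _ => sum_congr rfl fun j _ => ?_
    push_cast
    ring_nf
  have hval : ∑' k, F k = l1 ^ (S + 1) * (1 - l2 ^ 2) / ((l1 - l2) * (1 - l1 * l2)) +
      l2 ^ (S + 1) * (1 - l1 ^ 2) / ((l2 - l1) * (1 - l2 * l1)) := by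
    rw [tsum_pow_natAbs_add_mul_pow_natAbs_sub, ← hS]
    exact tsum_pow_natAbs_mul_pow_natAbs_sub h1 h2 hne S
  rw [← hval]
  simpa only [hsum, one_div, smul_eq_mul] using tendsto_inv_smul_sum_range_sum_range_sub
    (summable_norm_pow_natAbs_add_mul_pow_natAbs_sub h1 h2.le s1 s2)
end

section
/- For a real number λ with 0 < |λ| < 1 and a nonnegative integer S, the sum ∑_{j₁=-∞}^{∞} ∑_{j₂=-∞}^{∞} λ^{|j₁|} λ^{|j₂|} λ^{|S-j₁-j₂|} equals λ^S · (2 + 3S + S² + 2(4 - S²)λ² + (2 - 3S + S²)λ⁴)/(2(1-λ²)²). -/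
/-!
Splitting the inner sum over `j₂` at `0` and at `n = S - j₁` shows that
`∑ j, x ^ |j| * x ^ |n - j| = (|n| + 1) x ^ |n| + 2 x ^ (|n| + 2) / (1 - x²)`: the `|n| + 1`
terms between the split points all equal `x ^ |n|`, and the two outer tails are geometric.
Summing `x ^ |j₁|` against this over `j₁`, split the same way at `0` and `S`, leaves a finite
arithmetic sum plus two arithmetico-geometric tails, whose total is the closed form.
The same computation with `‖x‖` in place of `x` gives absolute convergence of the double sum.
-/

open Finset

section IntSplit

variable {M : Type*} [AddCommMonoid M] [TopologicalSpace M] [ContinuousAdd M]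

theorem HasSum.of_nat_add_of_neg_add_one {g : ℤ → M} (m : ℕ) {a b : M}
    (hpos : HasSum (fun t : ℕ => g ↑(t + m)) a) (hneg : HasSum (fun t : ℕ => g (-(t + 1))) b) :
    HasSum g (∑ k ∈ range m, g k + a + b) :=
  (HasSum.sum_range_add (f := fun k : ℕ => g k) hpos).of_nat_of_neg_add_one hneg

end IntSplit

section PowNatAbs

variable {𝕜 : Type*} [NormedField 𝕜] {x : 𝕜}

theorem norm_sq_lt_one (hx : ‖x‖ < 1) : ‖x ^ 2‖ < 1 := by
  rw [norm_pow]
  exact pow_lt_one₀ (norm_nonneg x) hx two_ne_zero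

theorem one_sub_sq_ne_zero (hx : ‖x‖ < 1) : 1 - x ^ 2 ≠ 0 :=
  (isUnit_one_sub_of_norm_lt_one (norm_sq_lt_one hx)).ne_zero

theorem hasSum_affine_mul_geometric {r : 𝕜} (hr : ‖r‖ < 1) (a b : 𝕜) :
    HasSum (fun n : ℕ => (a * n + b) * r ^ n) (a * r / (1 - r) ^ 2 + b * (1 - r)⁻¹) := by
  rw [mul_div_assoc]
  exact (((hasSum_coe_mul_geometric_of_norm_lt_one hr).mul_left a).add
    ((hasSum_geometric_of_norm_lt_one hr).mul_left b)).congr_fun fun n => by ring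


/-- The value of `∑ j : ℤ, x ^ |j| * x ^ |n - j|` at `|n| = m`. -/
noncomputable def powNatAbsConv (x : 𝕜) (m : ℕ) : 𝕜 :=
  (m + 1) * x ^ m + 2 * x ^ (m + 2) / (1 - x ^ 2)

theorem hasSum_pow_natAbs_mul_pow_natAbs_natCast_sub (hx : ‖x‖ < 1) (m : ℕ) :
    HasSum (fun j : ℤ => x ^ j.natAbs * x ^ ((m : ℤ) - j).natAbs) (powNatAbsConv x m) := by
  have htail : HasSum (fun t : ℕ => x ^ (m + 2) * (x ^ 2) ^ t) (x ^ (m + 2) * (1 - x ^ 2)⁻¹) :=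
    (hasSum_geometric_of_norm_lt_one (norm_sq_lt_one hx)).mul_left _
  have hmid : ∀ k ∈ range (m + 1), x ^ (k : ℤ).natAbs * x ^ ((m : ℤ) - k).natAbs = x ^ m := by
    intro k hk
    obtain ⟨d, rfl⟩ := Nat.exists_eq_add_of_le (Nat.lt_succ_iff.mp (mem_range.mp hk))
    rw [Int.natAbs_natCast, show ((↑(k + d) : ℤ) - k).natAbs = d by omega, pow_add]
  have hsplit := HasSum.of_nat_add_of_neg_add_one
    (g := fun j : ℤ => x ^ j.natAbs * x ^ ((m : ℤ) - j).natAbs) (m + 1)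
    (htail.congr_fun fun t => ?pos) (htail.congr_fun fun t => ?neg)
  · rw [sum_congr rfl hmid, sum_const, card_range, nsmul_eq_mul] at hsplit
    convert hsplit using 1
    rw [powNatAbsConv]
    field_simp [one_sub_sq_ne_zero hx]
    push_cast
    ring
  case pos =>
    rw [show (((t + (m + 1) : ℕ) : ℤ)).natAbs = t + m + 1 by omega,
      show ((m : ℤ) - ((t + (m + 1) : ℕ) : ℤ)).natAbs = t + 1 by omega]
    ring
  case neg =>
    rw [show (-((t : ℤ) + 1)).natAbs = t + 1 by omega,
      show ((m : ℤ) - -((t : ℤ) + 1)).natAbs = t + m + 1 by omega]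
    ring

theorem hasSum_pow_natAbs_mul_pow_natAbs_sub (hx : ‖x‖ < 1) (n : ℤ) :
    HasSum (fun j : ℤ => x ^ j.natAbs * x ^ (n - j).natAbs) (powNatAbsConv x n.natAbs) := by
  obtain ⟨m, rfl | rfl⟩ := Int.eq_nat_or_neg n
  · exact hasSum_pow_natAbs_mul_pow_natAbs_natCast_sub hx m
  · rw [Int.natAbs_neg, Int.natAbs_natCast, ← (Equiv.neg ℤ).hasSum_iff]
    refine (hasSum_pow_natAbs_mul_pow_natAbs_natCast_sub hx m).congr_fun fun j => ?_
    simp only [Function.comp_apply, Equiv.neg_apply, Int.natAbs_neg, neg_sub_neg,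
      ← Int.natAbs_neg ((m : ℤ) - j), neg_sub]

theorem hasSum_pow_natAbs_mul_powNatAbsConv_sub [CharZero 𝕜] (hx : ‖x‖ < 1) (S : ℕ) :
    HasSum (fun j : ℤ => x ^ j.natAbs * powNatAbsConv x ((S : ℤ) - j).natAbs)
      (x ^ S * (2 + 3 * (S : 𝕜) + (S : 𝕜) ^ 2 + 2 * (4 - (S : 𝕜) ^ 2) * x ^ 2 +
        (2 - 3 * (S : 𝕜) + (S : 𝕜) ^ 2) * x ^ 4) / (2 * (1 - x ^ 2) ^ 2)) := by
  have hpos := hasSum_affine_mul_geometric (norm_sq_lt_one hx) (x ^ (S + 2))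
    (2 * x ^ (S + 2) + 2 * x ^ (S + 4) / (1 - x ^ 2))
  have hneg := hasSum_affine_mul_geometric (norm_sq_lt_one hx) (x ^ (S + 2))
    ((S + 2) * x ^ (S + 2) + 2 * x ^ (S + 4) / (1 - x ^ 2))
  have hmid : ∀ k ∈ range (S + 1), x ^ (k : ℤ).natAbs * powNatAbsConv x ((S : ℤ) - k).natAbs
      = (((S : 𝕜) + 1) * x ^ S + 2 * x ^ (S + 2) / (1 - x ^ 2)) - k * x ^ S := by
    intro k hk
    obtain ⟨d, rfl⟩ := Nat.exists_eq_add_of_le (Nat.lt_succ_iff.mp (mem_range.mp hk))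
    rw [Int.natAbs_natCast, show ((↑(k + d) : ℤ) - k).natAbs = d by omega, powNatAbsConv]
    push_cast
    ring
  have hgauss : ∑ k ∈ range (S + 1), (k : 𝕜) = (S + 1) * S / 2 := by
    have h := sum_range_id_mul_two (S + 1)
    rw [Nat.add_sub_cancel] at h
    rw [eq_div_iff two_ne_zero, ← Nat.cast_sum]
    exact_mod_cast h
  have hsplit := HasSum.of_nat_add_of_neg_add_one
    (g := fun j : ℤ => x ^ j.natAbs * powNatAbsConv x ((S : ℤ) - j).natAbs) (S + 1)
    (hpos.congr_fun fun t => ?pos) (hneg.congr_fun fun t => ?neg)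
  · rw [sum_congr rfl hmid, sum_sub_distrib, sum_const, card_range, nsmul_eq_mul, ← sum_mul,
      hgauss] at hsplit
    convert hsplit using 1
    field_simp [one_sub_sq_ne_zero hx]
    push_cast
    ring
  case pos =>
    rw [show (((t + (S + 1) : ℕ) : ℤ)).natAbs = t + S + 1 by omega,
      show ((S : ℤ) - ((t + (S + 1) : ℕ) : ℤ)).natAbs = t + 1 by omega, powNatAbsConv]
    push_cast
    ring
  case neg =>
    rw [show (-((t : ℤ) + 1)).natAbs = t + 1 by omega,
      show ((S : ℤ) - -((t : ℤ) + 1)).natAbs = t + S + 1 by omega, powNatAbsConv]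
    push_cast
    ring

theorem hasSum_triple_pow_natAbs_fiber (hx : ‖x‖ < 1) (n j₁ : ℤ) :
    HasSum (fun j₂ : ℤ => x ^ j₁.natAbs * x ^ j₂.natAbs * x ^ (n - j₁ - j₂).natAbs)
      (x ^ j₁.natAbs * powNatAbsConv x (n - j₁).natAbs) := by
  simpa only [mul_assoc] using
    (hasSum_pow_natAbs_mul_pow_natAbs_sub hx (n - j₁)).mul_left (x ^ j₁.natAbs)

theorem summable_triple_pow_natAbs [CompleteSpace 𝕜] (hx : ‖x‖ < 1) (S : ℕ) :
    Summable fun p : ℤ × ℤ => x ^ p.1.natAbs * x ^ p.2.natAbs * x ^ ((S : ℤ) - p.1 - p.2).natAbs := by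
  have hx' : ‖‖x‖‖ < 1 := by rwa [norm_norm]
  refine Summable.of_norm ?_
  simp only [norm_mul, norm_pow]
  refine (summable_prod_of_nonneg fun p => by positivity).mpr
    ⟨fun j₁ => (hasSum_triple_pow_natAbs_fiber hx' S j₁).summable, ?_⟩
  exact (hasSum_pow_natAbs_mul_powNatAbsConv_sub hx' S).summable.congr fun j₁ =>
    (hasSum_triple_pow_natAbs_fiber hx' S j₁).tsum_eq.symm

end PowNatAbs

theorem stmt_7_general (l : ℝ) (h' : |l| < 1) (S : ℕ) :
    ∑' p : ℤ × ℤ, l ^ p.1.natAbs * l ^ p.2.natAbs * l ^ ((S : ℤ) - p.1 - p.2).natAbs =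
      l ^ S * (2 + 3 * (S : ℝ) + (S : ℝ) ^ 2 + 2 * (4 - (S : ℝ) ^ 2) * l ^ 2 +
        (2 - 3 * (S : ℝ) + (S : ℝ) ^ 2) * l ^ 4) / (2 * (1 - l ^ 2) ^ 2) := by
  have hl : ‖l‖ < 1 := h'
  exact ((summable_triple_pow_natAbs hl S).hasSum.prod_fiberwise
    (hasSum_triple_pow_natAbs_fiber hl S)).unique (hasSum_pow_natAbs_mul_powNatAbsConv_sub hl S)

theorem stmt_7 (l : ℝ) (h : 0 < |l|) (h' : |l| < 1) (S : ℕ) :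
    ∑' p : ℤ × ℤ, l ^ p.1.natAbs * l ^ p.2.natAbs * l ^ ((S : ℤ) - p.1 - p.2).natAbs =
      l ^ S * (2 + 3 * (S : ℝ) + (S : ℝ) ^ 2 + 2 * (4 - (S : ℝ) ^ 2) * l ^ 2 +
        (2 - 3 * (S : ℝ) + (S : ℝ) ^ 2) * l ^ 4) / (2 * (1 - l ^ 2) ^ 2) :=
  stmt_7_general l h' S
end

section
/- For real numbers λ₁, λ₂, λ₃ with |λᵢ| < 1, pairwise distinct, and a nonnegative integer S, the sum over the closed first quadrant ∑_{j₁≥0} ∑_{j₂≥0} λ₁^{j₁} λ₂^{j₂} λ₃^{|S-j₁-j₂|} equals λ₁^{S+2}(1-λ₃²)/((λ₁-λ₂)(λ₁-λ₃)(1-λ₁λ₃)) + λ₂^{S+2}(1-λ₃²)/((λ₂-λ₁)(λ₂-λ₃)(1-λ₂λ₃)) + λ₃^{S+2}/((λ₃-λ₁)(λ₃-λ₂)). -/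
/-!
Group the terms by `n = j₁ + j₂`: the antidiagonal sum of `λ₁^j₁ λ₂^j₂` is
`(λ₁^(n+1) - λ₂^(n+1)) / (λ₁ - λ₂)`, so the double series becomes a combination of the two
single series `∑ₙ a^n λ₃^|S-n|` for `a = λ₁, λ₂`. Each of these splits at `n = S` into a finite
geometric sum `∑_{n ≤ S} a^n λ₃^(S-n)` and the geometric tail `a^(S+1) λ₃ ∑ₖ (a λ₃)^k`, and
the stated partial-fraction formula is the resulting rational expression with denominators cleared.
-/

open Finset

theorem Summable.tsum_eq_tsum_sum_antidiagonal {α A : Type*} [AddCommMonoid α] [TopologicalSpace α]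
    [ContinuousAdd α] [T3Space α] [AddCommMonoid A] [HasAntidiagonal A] {f : A × A → α}
    (hf : Summable f) : ∑' p, f p = ∑' n, ∑ p ∈ antidiagonal n, f p := by
  rw [← HasAntidiagonal.sigmaAntidiagonalEquivProd.tsum_eq f]
  refine ((HasAntidiagonal.sigmaAntidiagonalEquivProd.summable_iff.mpr hf).tsum_sigma'
    fun n => (hasSum_fintype _).summable).trans ?_
  exact tsum_congr fun n => Finset.tsum_subtype (antidiagonal n) f

theorem sum_antidiagonal_pow_mul_pow_mul_sub {R : Type*} [CommRing R] (x y : R) (n : ℕ) :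
    (∑ p ∈ antidiagonal n, x ^ p.1 * y ^ p.2) * (x - y) = x ^ (n + 1) - y ^ (n + 1) := by
  rw [Nat.sum_antidiagonal_eq_sum_range_succ_mk, ← geom_sum₂_mul, Nat.add_sub_cancel]

theorem Summable.mul_of_abs_le_one {ι : Type*} {f g : ι → ℝ} (hf : Summable f)
    (hg : ∀ i, |g i| ≤ 1) : Summable fun i => f i * g i :=
  hf.abs.of_norm_bounded fun i => by
    simpa [abs_mul] using mul_le_of_le_one_right (abs_nonneg (f i)) (hg i)

theorem abs_mul_lt_one {a c : ℝ} (ha : |a| < 1) (hc : |c| ≤ 1) : |a * c| < 1 := by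
  rw [abs_mul]
  exact mul_lt_one_of_nonneg_of_lt_one_left (abs_nonneg a) ha hc

theorem one_sub_mul_ne_zero_of_abs_lt_one {a c : ℝ} (ha : |a| < 1) (hc : |c| ≤ 1) :
    1 - a * c ≠ 0 :=
  (sub_pos.2 ((le_abs_self _).trans_lt (abs_mul_lt_one ha hc))).ne'

theorem tsum_pow_mul_pow_mul_mul_sub {x y : ℝ} (hx : |x| < 1) (hy : |y| < 1) {g : ℕ → ℝ}
    (hg : ∀ n, |g n| ≤ 1) :
    (∑' p : ℕ × ℕ, x ^ p.1 * y ^ p.2 * g (p.1 + p.2)) * (x - y) =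
      x * ∑' n, x ^ n * g n - y * ∑' n, y ^ n * g n := by
  have hgeom {z : ℝ} (hz : |z| < 1) : Summable fun n => z ^ n * g n :=
    (summable_geometric_of_abs_lt_one hz).mul_of_abs_le_one hg
  have hprod : Summable fun p : ℕ × ℕ => x ^ p.1 * y ^ p.2 :=
    summable_mul_of_summable_norm (by simpa using summable_geometric_of_lt_one (abs_nonneg x) hx)
      (by simpa using summable_geometric_of_lt_one (abs_nonneg y) hy)
  rw [(hprod.mul_of_abs_le_one fun p => hg _).tsum_eq_tsum_sum_antidiagonal, ← tsum_mul_right,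
    ← tsum_mul_left, ← tsum_mul_left, ← ((hgeom hx).mul_left x).tsum_sub ((hgeom hy).mul_left y)]
  refine tsum_congr fun n => ?_
  rw [sum_congr rfl fun p hp => by rw [mem_antidiagonal.mp hp], ← sum_mul, mul_right_comm,
    sum_antidiagonal_pow_mul_pow_mul_sub]
  ring

theorem tsum_pow_mul_pow_natAbs_sub {a c : ℝ} (ha : |a| < 1) (hc : |c| < 1) (hac : a ≠ c) (S : ℕ) :
    ∑' n : ℕ, a ^ n * c ^ ((S : ℤ) - n).natAbs =
      (a ^ (S + 1) - c ^ (S + 1)) / (a - c) + a ^ (S + 1) * c / (1 - a * c) := by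
  have hsum : Summable fun n : ℕ => a ^ n * c ^ ((S : ℤ) - n).natAbs :=
    (summable_geometric_of_abs_lt_one ha).mul_of_abs_le_one fun n => by
      rw [abs_pow]; exact pow_le_one₀ (abs_nonneg c) hc.le
  have head : ∑ n ∈ range (S + 1), a ^ n * c ^ ((S : ℤ) - n).natAbs =
      (a ^ (S + 1) - c ^ (S + 1)) / (a - c) := by
    rw [eq_div_iff (sub_ne_zero.mpr hac), ← geom_sum₂_mul, Nat.add_sub_cancel]
    refine congrArg (· * (a - c)) (sum_congr rfl fun n hn => ?_)
    rw [mem_range] at hn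
    congr 2
    omega
  have tail : ∑' n : ℕ, a ^ (n + (S + 1)) * c ^ ((S : ℤ) - ↑(n + (S + 1))).natAbs =
      a ^ (S + 1) * c / (1 - a * c) := by
    have hterm (n : ℕ) : a ^ (n + (S + 1)) * c ^ ((S : ℤ) - ↑(n + (S + 1))).natAbs =
        a ^ (S + 1) * c * (a * c) ^ n := by
      rw [show ((S : ℤ) - ↑(n + (S + 1))).natAbs = n + 1 by omega]
      ring
    simp only [hterm]
    rw [tsum_mul_left, tsum_geometric_of_norm_lt_one (abs_mul_lt_one ha hc.le), div_eq_mul_inv]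
  rw [← hsum.sum_add_tsum_nat_add (S + 1), head, tail]

theorem stmt_8 (l1 l2 l3 : ℝ) (h1 : |l1| < 1) (h2 : |l2| < 1) (h3 : |l3| < 1)
    (h12 : l1 ≠ l2) (h13 : l1 ≠ l3) (h23 : l2 ≠ l3) (S : ℕ) :
    ∑' p : ℕ × ℕ, l1 ^ p.1 * l2 ^ p.2 * l3 ^ ((S : ℤ) - p.1 - p.2).natAbs =
      l1 ^ (S + 2) * (1 - l3 ^ 2) / ((l1 - l2) * (l1 - l3) * (1 - l1 * l3)) +
      l2 ^ (S + 2) * (1 - l3 ^ 2) / ((l2 - l1) * (l2 - l3) * (1 - l2 * l3)) +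
      l3 ^ (S + 2) / ((l3 - l1) * (l3 - l2)) := by
  have key := tsum_pow_mul_pow_mul_mul_sub h1 h2 (g := fun n => l3 ^ ((S : ℤ) - n).natAbs)
    fun n => by rw [abs_pow]; exact pow_le_one₀ (abs_nonneg l3) h3.le
  simp only [Nat.cast_add, ← sub_sub] at key
  rw [eq_div_of_mul_eq (sub_ne_zero.mpr h12) key, tsum_pow_mul_pow_natAbs_sub h1 h3 h13,
    tsum_pow_mul_pow_natAbs_sub h2 h3 h23]
  field_simp [sub_ne_zero.mpr h12, sub_ne_zero.mpr h13, sub_ne_zero.mpr h23,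
    sub_ne_zero.mpr h12.symm, sub_ne_zero.mpr h13.symm, sub_ne_zero.mpr h23.symm,
    one_sub_mul_ne_zero_of_abs_lt_one h1 h3.le, one_sub_mul_ne_zero_of_abs_lt_one h2 h3.le,
    one_sub_mul_ne_zero_of_abs_lt_one h3 h1.le, one_sub_mul_ne_zero_of_abs_lt_one h3 h2.le]
  ring
end

section
/- For real numbers λ₁, λ₂, λ₃ with |λᵢ| < 1, λ₂ ≠ λ₃, and a nonnegative integer S, the sum ∑_{j₁≤0} ∑_{j₂≥0} λ₁^{-j₁} λ₂^{j₂} λ₃^{|S-j₁-j₂|} (over integers j₁ ≤ 0 and j₂ ≥ 0) equals λ₂^{S+1}(1-λ₃²)/((λ₂-λ₃)(1-λ₂λ₁)(1-λ₂λ₃)) + λ₃^{S+1}/((λ₃-λ₂)(1-λ₃λ₁)). -/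
/-! For fixed `p.1 = b` the exponent `S + b - c` of `λ₃` changes sign at `c = S + b`: the inner sum
over `c` is a finite two-variable geometric sum plus a geometric tail, and works out to a linear
combination of `λ₂ ^ (S + b)` and `λ₃ ^ (S + b)`. Weighted by `λ₁ ^ b`, the outer sum is then two
geometric series in `λ₁ λ₂` and `λ₁ λ₃`. -/

open Finset

lemma abs_mul_lt_one_of_lt_of_le {x y : ℝ} (hx : |x| < 1) (hy : |y| ≤ 1) : |x * y| < 1 := by
  rw [abs_mul]
  exact mul_lt_one_of_nonneg_of_lt_one_left (abs_nonneg x) hx hy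

lemma summable_mul_pow_of_abs_le_one {ι : Type*} {f : ι → ℝ} (hf : Summable fun i => ‖f i‖)
    {y : ℝ} (hy : |y| ≤ 1) (e : ι → ℕ) : Summable fun i => f i * y ^ e i :=
  hf.of_norm_bounded fun i => by
    rw [norm_mul, norm_pow, Real.norm_eq_abs y]
    exact mul_le_of_le_one_right (norm_nonneg _) (pow_le_one₀ (abs_nonneg y) hy)

lemma hasSum_pow_mul_pow_add {x y : ℝ} (h : |x * y| < 1) (S : ℕ) :
    HasSum (fun b : ℕ => x ^ b * y ^ (S + b)) (y ^ S / (1 - x * y)) := by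
  rw [div_eq_mul_inv]
  exact ((hasSum_geometric_of_abs_lt_one h).mul_left (y ^ S)).congr_fun fun b => by ring

lemma hasSum_pow_mul_pow_natAbs_sub {x y : ℝ} (hx : |x| < 1) (hy : |y| ≤ 1) (hxy : x ≠ y)
    (N : ℕ) :
    HasSum (fun j : ℕ => x ^ j * y ^ ((N : ℤ) - j).natAbs)
      (x * (1 - y ^ 2) / ((x - y) * (1 - x * y)) * x ^ N + y / (y - x) * y ^ N) := by
  have hxy' : |x * y| < 1 := abs_mul_lt_one_of_lt_of_le hx hy
  have hyx : |y * x| < 1 := by rwa [mul_comm]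
  have head : ∑ j ∈ range (N + 1), x ^ j * y ^ ((N : ℤ) - j).natAbs =
      (x ^ (N + 1) - y ^ (N + 1)) / (x - y) := by
    rw [← (Commute.all x y).geom_sum₂ hxy]
    refine sum_congr rfl fun j hj => ?_
    rw [mem_range] at hj
    congr 2
    omega
  have tail : HasSum (fun k : ℕ => x ^ (k + (N + 1)) * y ^ ((N : ℤ) - ↑(k + (N + 1))).natAbs)
      (y * (x ^ (N + 1) / (1 - y * x))) := by
    refine ((hasSum_pow_mul_pow_add hyx (N + 1)).mul_left y).congr_fun fun k => ?_
    rw [show ((N : ℤ) - ↑(k + (N + 1))).natAbs = k + 1 by omega]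
    ring
  have split : x * (1 - y ^ 2) / ((x - y) * (1 - x * y)) * x ^ N + y / (y - x) * y ^ N -
      (x ^ (N + 1) - y ^ (N + 1)) / (x - y) = y * (x ^ (N + 1) / (1 - y * x)) := by
    have := sub_ne_zero.2 hxy
    have : 1 - x * y ≠ 0 := (sub_pos.2 (abs_lt.1 hxy').2).ne'
    field_simp
    ring
  rwa [← hasSum_nat_add_iff' (N + 1), head, split]

theorem stmt_9 (l1 l2 l3 : ℝ) (h1 : |l1| < 1) (h2 : |l2| < 1) (h3 : |l3| < 1)
    (h23 : l2 ≠ l3) (S : ℕ) :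
    ∑' p : ℕ × ℕ, l1 ^ p.1 * l2 ^ p.2 * l3 ^ ((S : ℤ) + p.1 - p.2).natAbs =
      l2 ^ (S + 1) * (1 - l3 ^ 2) / ((l2 - l3) * (1 - l2 * l1) * (1 - l2 * l3)) +
      l3 ^ (S + 1) / ((l3 - l2) * (1 - l3 * l1)) := by
  have hsum : Summable fun p : ℕ × ℕ => l1 ^ p.1 * l2 ^ p.2 * l3 ^ ((S : ℤ) + p.1 - p.2).natAbs :=
    summable_mul_pow_of_abs_le_one
      ((summable_norm_geometric_of_norm_lt_one h1).mul_norm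
        (summable_norm_geometric_of_norm_lt_one h2)) h3.le _
  have row (b : ℕ) : HasSum (fun c : ℕ => l1 ^ b * l2 ^ c * l3 ^ ((S : ℤ) + b - c).natAbs)
      (l1 ^ b * (l2 * (1 - l3 ^ 2) / ((l2 - l3) * (1 - l2 * l3)) * l2 ^ (S + b) +
        l3 / (l3 - l2) * l3 ^ (S + b))) := by
    refine ((hasSum_pow_mul_pow_natAbs_sub h2 h3.le h23 (S + b)).mul_left (l1 ^ b)).congr_fun
      fun c => ?_
    push_cast
    ring
  have col := ((hasSum_pow_mul_pow_add (abs_mul_lt_one_of_lt_of_le h1 h2.le) S).mul_left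
    (l2 * (1 - l3 ^ 2) / ((l2 - l3) * (1 - l2 * l3)))).add
    ((hasSum_pow_mul_pow_add (abs_mul_lt_one_of_lt_of_le h1 h3.le) S).mul_left (l3 / (l3 - l2)))
  rw [hsum.tsum_prod, tsum_congr fun b => (row b).tsum_eq, (col.congr_fun fun b => by ring).tsum_eq]
  field_simp
  ring
end

section
/- For real numbers λ₁, λ₂, λ₃, λ₄ with |λᵢ| < 1, pairwise distinct, and a nonnegative integer S, the sum over the closed first octant ∑_{j₁≥0} ∑_{j₂≥0} ∑_{j₃≥0} λ₁^{j₁} λ₂^{j₂} λ₃^{j₃} λ₄^{|S-j₁-j₂-j₃|} equals λ₁^{S+3}(1-λ₄²)/((λ₁-λ₂)(λ₁-λ₃)(λ₁-λ₄)(1-λ₁λ₄)) + λ₂^{S+3}(1-λ₄²)/((λ₂-λ₁)(λ₂-λ₃)(λ₂-λ₄)(1-λ₂λ₄)) + λ₃^{S+3}(1-λ₄²)/((λ₃-λ₁)(λ₃-λ₂)(λ₃-λ₄)(1-λ₃λ₄)) + λ₄^{S+3}/((λ₄-λ₁)(λ₄-λ₂)(λ₄-λ₃)). -/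
/-!
Write `T_x g m = ∑_{j ≥ 0} x ^ j * g (m - j)` for the convolution of `g : ℤ → ℝ` with a one-sided
geometric sequence. The octant sum is `T_{λ₁} (T_{λ₂} (T_{λ₃} g)) S` with `g m = λ₄ ^ |m|`, and
`g` splits into the one-sided sequences `[m ≥ 0] λ₄ ^ m` and `[m < 0] λ₄ ^ (-m)`. The span of all
such one-sided sequences is stable under `T_x` (a finite geometric sum for the first kind, a geometric
series for the second), so `g` can be pushed through the three operators one at a time. At each step
the coefficient of the new sequence `[m ≥ 0] x ^ m` is a partial-fraction identity.
-/

noncomputable def rightGeom (r : ℝ) (m : ℤ) : ℝ := if 0 ≤ m then r ^ m.natAbs else 0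

noncomputable def leftGeom (y : ℝ) (m : ℤ) : ℝ := if m < 0 then y ^ m.natAbs else 0

noncomputable def geomConv (x : ℝ) (g : ℤ → ℝ) (m : ℤ) : ℝ := ∑' j : ℕ, x ^ j * g (m - j)

def GeomConvSummable (x : ℝ) (g : ℤ → ℝ) : Prop :=
  ∀ m : ℤ, Summable fun j : ℕ => x ^ j * g (m - j)

lemma rightGeom_natCast (r : ℝ) (n : ℕ) : rightGeom r n = r ^ n := by
  simp [rightGeom]

lemma leftGeom_natCast (y : ℝ) (n : ℕ) : leftGeom y n = 0 := by
  simp [leftGeom]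

lemma pow_natAbs_eq_rightGeom_add_leftGeom (y : ℝ) :
    (fun m : ℤ => y ^ m.natAbs) = rightGeom y + leftGeom y := by
  funext m
  by_cases hm : 0 ≤ m
  · simp [rightGeom, leftGeom, hm]
  · simp [rightGeom, leftGeom, hm, not_le.mp hm]

lemma one_sub_mul_ne_zero {x y : ℝ} (hx : |x| < 1) (hy : |y| < 1) : 1 - x * y ≠ 0 := by
  have : |x * y| < 1 := by
    rw [abs_mul]
    exact mul_lt_one_of_nonneg_of_lt_one_left (abs_nonneg x) hx hy.le
  exact sub_ne_zero.mpr ((le_abs_self _).trans_lt this).ne'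

namespace GeomConvSummable

variable {x : ℝ} {g h : ℤ → ℝ}

lemma add (hg : GeomConvSummable x g) (hh : GeomConvSummable x h) :
    GeomConvSummable x (g + h) := fun m => by
  simpa only [Pi.add_apply, mul_add] using (hg m).add (hh m)

lemma const_smul (c : ℝ) (hg : GeomConvSummable x g) : GeomConvSummable x (c • g) := fun m => by
  simpa only [Pi.smul_apply, smul_eq_mul, mul_left_comm] using (hg m).mul_left c

end GeomConvSummable

lemma geomConvSummable_of_abs_le_one {x : ℝ} (hx : |x| < 1) {g : ℤ → ℝ} (hg : ∀ m, |g m| ≤ 1) :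
    GeomConvSummable x g := fun m => by
  refine Summable.of_norm_bounded (summable_geometric_of_lt_one (abs_nonneg x) hx) fun j => ?_
  rw [Real.norm_eq_abs, abs_mul, abs_pow]
  exact mul_le_of_le_one_right (by positivity) (hg _)

lemma geomConvSummable_rightGeom (x r : ℝ) : GeomConvSummable x (rightGeom r) := fun m => by
  refine summable_of_ne_finset_zero (s := Finset.range (m.natAbs + 1)) fun j hj => ?_
  have : ¬ 0 ≤ m - j := by simp only [Finset.mem_range, not_lt] at hj; omega
  simp only [rightGeom, if_neg this, mul_zero]

lemma abs_leftGeom_le_one {y : ℝ} (hy : |y| ≤ 1) (m : ℤ) : |leftGeom y m| ≤ 1 := by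
  unfold leftGeom
  split_ifs
  · rw [abs_pow]; exact pow_le_one₀ (abs_nonneg y) hy
  · simp

lemma geomConvSummable_leftGeom {x y : ℝ} (hx : |x| < 1) (hy : |y| < 1) :
    GeomConvSummable x (leftGeom y) :=
  geomConvSummable_of_abs_le_one hx (abs_leftGeom_le_one hy.le)

section linear

variable {x : ℝ} {g h : ℤ → ℝ}

lemma geomConv_add (hg : GeomConvSummable x g) (hh : GeomConvSummable x h) :
    geomConv x (g + h) = geomConv x g + geomConv x h := by
  funext m
  simp only [geomConv, Pi.add_apply, mul_add]
  exact (hg m).tsum_add (hh m)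

lemma geomConv_const_smul (c : ℝ) : geomConv x (c • g) = c • geomConv x g := by
  funext m
  simp only [geomConv, Pi.smul_apply, smul_eq_mul, mul_left_comm _ c]
  exact tsum_mul_left

end linear

lemma geomConv_rightGeom {x r : ℝ} (hxr : x ≠ r) :
    geomConv x (rightGeom r) = (r / (r - x)) • rightGeom r + (x / (x - r)) • rightGeom x := by
  funext m
  simp only [geomConv, Pi.add_apply, Pi.smul_apply, smul_eq_mul]
  rcases lt_or_ge m 0 with hm | hm
  · have hneg : ∀ j : ℕ, ¬ 0 ≤ m - j := fun j => by omega
    simp only [rightGeom, hneg, if_false, mul_zero, tsum_zero, not_le.mpr hm, add_zero]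
  · obtain ⟨n, rfl⟩ := Int.eq_ofNat_of_zero_le hm
    have hvanish : ∀ j ∉ Finset.range (n + 1), x ^ j * rightGeom r (n - j) = 0 := fun j hj => by
      have : ¬ 0 ≤ (n : ℤ) - j := by simp only [Finset.mem_range, not_lt] at hj; omega
      simp only [rightGeom, if_neg this, mul_zero]
    have hterm : ∀ j ∈ Finset.range (n + 1),
        x ^ j * rightGeom r (n - j) = x ^ j * r ^ (n + 1 - 1 - j) := fun j hj => by
      have : (0 : ℤ) ≤ n - j := by simp only [Finset.mem_range] at hj; omega
      have habs : ((n : ℤ) - j).natAbs = n + 1 - 1 - j := by omega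
      simp only [rightGeom, if_pos this, habs]
    have hxr' : x - r ≠ 0 := sub_ne_zero.mpr hxr
    have hrx' : r - x ≠ 0 := sub_ne_zero.mpr hxr.symm
    rw [tsum_eq_sum hvanish, Finset.sum_congr rfl hterm,
      eq_div_of_mul_eq hxr' (geom_sum₂_mul x r (n + 1)), rightGeom_natCast, rightGeom_natCast]
    field_simp
    ring

lemma geomConv_leftGeom {x y : ℝ} (hx : |x| < 1) (hy : |y| < 1) :
    geomConv x (leftGeom y) =
      (x * y / (1 - x * y)) • rightGeom x + (1 / (1 - x * y)) • leftGeom y := by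
  funext m
  simp only [geomConv, Pi.add_apply, Pi.smul_apply, smul_eq_mul]
  have hxy : 1 - x * y ≠ 0 := one_sub_mul_ne_zero hx hy
  have hgeom : ∑' j : ℕ, (x * y) ^ j = (1 - x * y)⁻¹ := by
    refine tsum_geometric_of_norm_lt_one ?_
    rw [Real.norm_eq_abs, abs_mul]
    exact mul_lt_one_of_nonneg_of_lt_one_left (abs_nonneg x) hx hy.le
  rcases lt_or_ge m 0 with hm | hm
  · have hterm : ∀ j : ℕ, x ^ j * leftGeom y (m - j) = y ^ m.natAbs * (x * y) ^ j := fun j => by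
      have hneg : m - j < 0 := by omega
      have habs : (m - j).natAbs = m.natAbs + j := by omega
      simp only [leftGeom, if_pos hneg, habs]
      ring
    rw [tsum_congr hterm, tsum_mul_left, hgeom]
    simp only [rightGeom, leftGeom, if_pos hm, not_le.mpr hm, if_false, mul_zero, zero_add]
    field_simp
  · obtain ⟨n, rfl⟩ := Int.eq_ofNat_of_zero_le hm
    have hvanish : ∑ j ∈ Finset.range (n + 1), x ^ j * leftGeom y (n - j) = 0 :=
      Finset.sum_eq_zero fun j hj => by
        have : ¬ (n : ℤ) - j < 0 := by simp only [Finset.mem_range] at hj; omega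
        simp only [leftGeom, if_neg this, mul_zero]
    have htail : ∀ k : ℕ, x ^ (k + (n + 1)) * leftGeom y (n - (k + (n + 1) : ℕ)) =
        x ^ (n + 1) * y * (x * y) ^ k := fun k => by
      have hneg : (n : ℤ) - (k + (n + 1) : ℕ) < 0 := by omega
      have habs : ((n : ℤ) - (k + (n + 1) : ℕ)).natAbs = k + 1 := by omega
      simp only [leftGeom, if_pos hneg, habs]
      ring
    rw [← ((geomConvSummable_leftGeom hx hy) n).sum_add_tsum_nat_add (n + 1), hvanish, zero_add,
      tsum_congr htail, tsum_mul_left, hgeom, rightGeom_natCast, leftGeom_natCast]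
    field_simp
    ring

lemma tsum_triple_eq_geomConv {x w z : ℝ} (hx : |x| < 1) (hw : |w| < 1) (hz : |z| < 1)
    {g : ℤ → ℝ} (hg : ∀ m, |g m| ≤ 1) (m : ℤ) :
    ∑' t : ℕ × ℕ × ℕ, x ^ t.1 * w ^ t.2.1 * z ^ t.2.2 * g (m - t.1 - t.2.1 - t.2.2) =
      geomConv x (geomConv w (geomConv z g)) m := by
  have hgeom {r : ℝ} (hr : |r| < 1) : Summable fun n : ℕ => |r| ^ n :=
    summable_geometric_of_lt_one (abs_nonneg r) hr
  have hsum : Summable fun t : ℕ × ℕ × ℕ =>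
      x ^ t.1 * w ^ t.2.1 * z ^ t.2.2 * g (m - t.1 - t.2.1 - t.2.2) := by
    refine Summable.of_norm_bounded ((hgeom hx).mul_of_nonneg ((hgeom hw).mul_of_nonneg (hgeom hz)
      (fun _ => by positivity) (fun _ => by positivity)) (fun _ => by positivity)
      (fun _ => by positivity)) fun t => ?_
    rw [Real.norm_eq_abs, abs_mul, abs_mul, abs_mul, abs_pow, abs_pow, abs_pow, ← mul_assoc]
    exact mul_le_of_le_one_right (by positivity) (hg _)
  rw [hsum.tsum_prod]
  refine tsum_congr fun j => ?_
  rw [(hsum.prod_factor j).tsum_prod, geomConv, ← tsum_mul_left]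
  refine tsum_congr fun k => ?_
  rw [geomConv, ← tsum_mul_left, ← tsum_mul_left]
  exact tsum_congr fun l => by ring

section partialFractions

variable {x w z y : ℝ}

lemma partialFraction_one (hzy : z ≠ y) (hz : 1 - z * y ≠ 0) :
    z / (z - y) + z * y / (1 - z * y) = z * (1 - y ^ 2) / ((z - y) * (1 - z * y)) := by
  rw [div_add_div _ _ (sub_ne_zero.mpr hzy) hz]
  ring

lemma partialFraction_two (hwz : w ≠ z) (hwy : w ≠ y) (hzy : z ≠ y)
    (hw : 1 - w * y ≠ 0) (hz : 1 - z * y ≠ 0) :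
    z * (1 - y ^ 2) / ((z - y) * (1 - z * y)) * (w / (w - z)) + y / (y - z) * (w / (w - y))
      + 1 / (1 - z * y) * (w * y / (1 - w * y))
      = w ^ 2 * (1 - y ^ 2) / ((w - z) * (w - y) * (1 - w * y)) := by
  have := sub_ne_zero.mpr hwz
  have := sub_ne_zero.mpr hwy
  have := sub_ne_zero.mpr hzy
  have := sub_ne_zero.mpr hzy.symm
  simp only [div_mul_div_comm]
  rw [div_add_div _ _ (by simp [*]) (by simp [*]), div_add_div _ _ (by simp [*]) (by simp [*]),
    div_eq_div_iff (by simp [*]) (by simp [*])]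
  ring

lemma partialFraction_three (hxw : x ≠ w) (hxz : x ≠ z) (hxy : x ≠ y) (hwz : w ≠ z)
    (hwy : w ≠ y) (hzy : z ≠ y) (hx : 1 - x * y ≠ 0) (hw : 1 - w * y ≠ 0) (hz : 1 - z * y ≠ 0) :
    w ^ 2 * (1 - y ^ 2) / ((w - z) * (w - y) * (1 - w * y)) * (x / (x - w))
      + z ^ 2 * (1 - y ^ 2) / ((z - w) * (z - y) * (1 - z * y)) * (x / (x - z))
      + y ^ 2 / ((y - w) * (y - z)) * (x / (x - y))
      + 1 / ((1 - w * y) * (1 - z * y)) * (x * y / (1 - x * y))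
      = x ^ 3 * (1 - y ^ 2) / ((x - w) * (x - z) * (x - y) * (1 - x * y)) := by
  have := sub_ne_zero.mpr hxw
  have := sub_ne_zero.mpr hxz
  have := sub_ne_zero.mpr hxy
  have := sub_ne_zero.mpr hwz
  have := sub_ne_zero.mpr hwy
  have := sub_ne_zero.mpr hzy
  have := sub_ne_zero.mpr hwz.symm
  have := sub_ne_zero.mpr hwy.symm
  have := sub_ne_zero.mpr hzy.symm
  simp only [div_mul_div_comm]
  rw [div_add_div _ _ (by simp [*]) (by simp [*]), div_add_div _ _ (by simp [*]) (by simp [*]),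
    div_add_div _ _ (by simp [*]) (by simp [*]), div_eq_div_iff (by simp [*]) (by simp [*])]
  ring

end partialFractions

section stages

variable {x w z y : ℝ}

lemma geomConv_pow_natAbs (hz : |z| < 1) (hy : |y| < 1) (hzy : z ≠ y) :
    geomConv z (fun m => y ^ m.natAbs) =
      (z * (1 - y ^ 2) / ((z - y) * (1 - z * y))) • rightGeom z + (y / (y - z)) • rightGeom y
        + (1 / (1 - z * y)) • leftGeom y := by
  rw [pow_natAbs_eq_rightGeom_add_leftGeom, geomConv_add (geomConvSummable_rightGeom z y)
    (geomConvSummable_leftGeom hz hy), geomConv_rightGeom hzy, geomConv_leftGeom hz hy]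
  match_scalars <;> simp only [mul_one]
  exact partialFraction_one hzy (one_sub_mul_ne_zero hz hy)

lemma geomConv_geomConv_pow_natAbs (hw : |w| < 1) (hz : |z| < 1) (hy : |y| < 1)
    (hwz : w ≠ z) (hwy : w ≠ y) (hzy : z ≠ y) :
    geomConv w (geomConv z (fun m => y ^ m.natAbs)) =
      (w ^ 2 * (1 - y ^ 2) / ((w - z) * (w - y) * (1 - w * y))) • rightGeom w
        + (z ^ 2 * (1 - y ^ 2) / ((z - w) * (z - y) * (1 - z * y))) • rightGeom z
        + (y ^ 2 / ((y - w) * (y - z))) • rightGeom y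
        + (1 / ((1 - w * y) * (1 - z * y))) • leftGeom y := by
  have hr := geomConvSummable_rightGeom w
  have hl := geomConvSummable_leftGeom hw hy
  rw [geomConv_pow_natAbs hz hy hzy]
  simp (disch := simp only [hr, hl, GeomConvSummable.add, GeomConvSummable.const_smul]) only
    [geomConv_add, geomConv_const_smul, geomConv_rightGeom hwz, geomConv_rightGeom hwy,
    geomConv_leftGeom hw hy]
  match_scalars <;> simp only [mul_one]
  -- every coefficient but that of `rightGeom w` is a single product of fractions
  all_goals first
    | rw [div_mul_div_comm]; congr 1 <;> ring1
    | exact partialFraction_two hwz hwy hzy (one_sub_mul_ne_zero hw hy) (one_sub_mul_ne_zero hz hy)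

lemma geomConv_geomConv_geomConv_pow_natAbs (hx : |x| < 1) (hw : |w| < 1) (hz : |z| < 1)
    (hy : |y| < 1) (hxw : x ≠ w) (hxz : x ≠ z) (hxy : x ≠ y) (hwz : w ≠ z) (hwy : w ≠ y)
    (hzy : z ≠ y) :
    geomConv x (geomConv w (geomConv z (fun m => y ^ m.natAbs))) =
      (x ^ 3 * (1 - y ^ 2) / ((x - w) * (x - z) * (x - y) * (1 - x * y))) • rightGeom x
        + (w ^ 3 * (1 - y ^ 2) / ((w - x) * (w - z) * (w - y) * (1 - w * y))) • rightGeom w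
        + (z ^ 3 * (1 - y ^ 2) / ((z - x) * (z - w) * (z - y) * (1 - z * y))) • rightGeom z
        + (y ^ 3 / ((y - x) * (y - w) * (y - z))) • rightGeom y
        + (1 / ((1 - x * y) * (1 - w * y) * (1 - z * y))) • leftGeom y := by
  have hr := geomConvSummable_rightGeom x
  have hl := geomConvSummable_leftGeom hx hy
  rw [geomConv_geomConv_pow_natAbs hw hz hy hwz hwy hzy]
  -- the summability side goals of `geomConv_add` nest one level per summand
  simp (disch := simp (maxDischargeDepth := 4) only
      [hr, hl, GeomConvSummable.add, GeomConvSummable.const_smul]) only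
    [geomConv_add, geomConv_const_smul, geomConv_rightGeom hxw, geomConv_rightGeom hxz,
    geomConv_rightGeom hxy, geomConv_leftGeom hx hy]
  match_scalars <;> simp only [mul_one]
  all_goals first
    | rw [div_mul_div_comm]; congr 1 <;> ring1
    | exact partialFraction_three hxw hxz hxy hwz hwy hzy (one_sub_mul_ne_zero hx hy)
        (one_sub_mul_ne_zero hw hy) (one_sub_mul_ne_zero hz hy)

end stages

theorem stmt_12 (l1 l2 l3 l4 : ℝ) (h1 : |l1| < 1) (h2 : |l2| < 1) (h3 : |l3| < 1)
    (h4 : |l4| < 1) (h12 : l1 ≠ l2) (h13 : l1 ≠ l3) (h14 : l1 ≠ l4)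
    (h23 : l2 ≠ l3) (h24 : l2 ≠ l4) (h34 : l3 ≠ l4) (S : ℕ) :
    ∑' t : ℕ × ℕ × ℕ,
        l1 ^ t.1 * l2 ^ t.2.1 * l3 ^ t.2.2 * l4 ^ ((S : ℤ) - t.1 - t.2.1 - t.2.2).natAbs =
      l1 ^ (S + 3) * (1 - l4 ^ 2) / ((l1 - l2) * (l1 - l3) * (l1 - l4) * (1 - l1 * l4)) +
      l2 ^ (S + 3) * (1 - l4 ^ 2) / ((l2 - l1) * (l2 - l3) * (l2 - l4) * (1 - l2 * l4)) +
      l3 ^ (S + 3) * (1 - l4 ^ 2) / ((l3 - l1) * (l3 - l2) * (l3 - l4) * (1 - l3 * l4)) +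
      l4 ^ (S + 3) / ((l4 - l1) * (l4 - l2) * (l4 - l3)) := by
  have hg (m : ℤ) : |l4 ^ m.natAbs| ≤ 1 := by
    rw [abs_pow]
    exact pow_le_one₀ (abs_nonneg l4) h4.le
  rw [tsum_triple_eq_geomConv h1 h2 h3 (g := fun m => l4 ^ m.natAbs) hg,
    geomConv_geomConv_geomConv_pow_natAbs h1 h2 h3 h4 h12 h13 h14 h23 h24 h34]
  simp only [Pi.add_apply, Pi.smul_apply, smul_eq_mul, rightGeom_natCast, leftGeom_natCast]
  ring
end

section
/- For real λ₁ ≠ λ₂ with |λ₁|, |λ₂| < 1 and nonnegative integer S, the function F₂(λ₁, λ₂; S) = λ₁^{S+1}(1-λ₂²)/((λ₁-λ₂)(1-λ₁λ₂)) + λ₂^{S+1}(1-λ₁²)/((λ₂-λ₁)(1-λ₂λ₁)) tends to λ₁^S(1 + S + (1-S)λ₁²)/(1-λ₁²) as λ₂ → λ₁. -/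
open Finset Filter

theorem stmt_19 (l1 : ℝ) (h1 : |l1| < 1) (S : ℕ) :
    Filter.Tendsto
      (fun l2 : ℝ => l1 ^ (S + 1) * (1 - l2 ^ 2) / ((l1 - l2) * (1 - l1 * l2)) +
        l2 ^ (S + 1) * (1 - l1 ^ 2) / ((l2 - l1) * (1 - l2 * l1)))
      (nhdsWithin l1 ({x : ℝ | |x| < 1} \ {l1}))
      (nhds (l1 ^ S * (1 + (S : ℝ) + (1 - (S : ℝ)) * l1 ^ 2) / (1 - l1 ^ 2))) := by
  have habs := abs_lt.mp h1
  have hsq : l1 ^ 2 < 1 := by nlinarith [habs.1, habs.2]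
  have hden : (1 : ℝ) - l1 ^ 2 ≠ 0 := by nlinarith
  set Q : ℝ → ℝ := fun l2 =>
    (1 - l2 ^ 2) * (∑ i ∈ Finset.range (S + 1), l1 ^ i * l2 ^ (S - i))
      + l2 ^ (S + 1) * (l1 + l2) with hQ
  have key : ∀ l2 : ℝ, l1 ^ (S + 1) * (1 - l2 ^ 2) - l2 ^ (S + 1) * (1 - l1 ^ 2)
      = (l1 - l2) * Q l2 := by
    intro l2
    have hgs := geom_sum₂_mul l1 l2 (S + 1)
    have hrw : ∀ i ∈ Finset.range (S + 1), l1 ^ i * l2 ^ (S + 1 - 1 - i) = l1 ^ i * l2 ^ (S - i) := by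
      intro i _; norm_num
    rw [Finset.sum_congr rfl hrw] at hgs
    have h2 : l1 ^ (S + 1) * (1 - l2 ^ 2) - l2 ^ (S + 1) * (1 - l1 ^ 2)
        = (1 - l2 ^ 2) * (l1 ^ (S + 1) - l2 ^ (S + 1)) + l2 ^ (S + 1) * (l1 ^ 2 - l2 ^ 2) := by
      ring
    rw [h2, ← hgs, hQ]; ring
  have hQcont : Continuous Q := by
    apply Continuous.add
    · exact (continuous_const.sub (continuous_pow 2)).mul
        (continuous_finset_sum _ fun i _ => continuous_const.mul (continuous_pow _))
    · exact (continuous_pow _).mul (continuous_const.add continuous_id)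
  have hsum : (∑ i ∈ Finset.range (S + 1), l1 ^ i * l1 ^ (S - i)) = ((S : ℝ) + 1) * l1 ^ S := by
    have hterm : ∀ i ∈ Finset.range (S + 1), l1 ^ i * l1 ^ (S - i) = l1 ^ S := fun i hi => by
      rw [← pow_add, Nat.add_sub_cancel' (Nat.lt_succ_iff.mp (Finset.mem_range.mp hi))]
    rw [Finset.sum_congr rfl hterm, Finset.sum_const, Finset.card_range, nsmul_eq_mul]
    push_cast; ring
  have hQl1 : Q l1 = (1 - l1 ^ 2) * (((S : ℝ) + 1) * l1 ^ S) + l1 ^ (S + 1) * (l1 + l1) := by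
    simp only [hQ]
    rw [hsum]
  have hcont : Tendsto (fun l2 => Q l2 / (1 - l1 * l2))
      (nhdsWithin l1 ({x : ℝ | |x| < 1} \ {l1}))
      (nhds (l1 ^ S * (1 + (S : ℝ) + (1 - (S : ℝ)) * l1 ^ 2) / (1 - l1 ^ 2))) := by
    have hval : Q l1 / (1 - l1 * l1)
        = l1 ^ S * (1 + (S : ℝ) + (1 - (S : ℝ)) * l1 ^ 2) / (1 - l1 ^ 2) := by
      rw [hQl1]
      have : (1 : ℝ) - l1 * l1 = 1 - l1 ^ 2 := by ring
      rw [this]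
      field_simp
      ring
    rw [← hval]
    apply Tendsto.mono_left _ nhdsWithin_le_nhds
    exact (hQcont.continuousAt.div
      ((continuous_const.sub (continuous_const.mul continuous_id)).continuousAt)
      (by simpa using (by nlinarith : (1:ℝ) - l1 * l1 ≠ 0))).tendsto
  apply hcont.congr'
  apply eventually_nhdsWithin_of_forall
  intro l2 hl2
  obtain ⟨hl2a, hl2b⟩ := hl2
  have hl2abs : |l2| < 1 := hl2a
  have hne : l2 ≠ l1 := hl2b
  have h12 : l1 - l2 ≠ 0 := sub_ne_zero.mpr (Ne.symm hne)
  have habs2 := abs_lt.mp hl2abs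
  have hml : (1 : ℝ) - l1 * l2 ≠ 0 := by nlinarith [habs.1, habs.2, habs2.1, habs2.2]
  have h21 : l2 - l1 ≠ 0 := sub_ne_zero.mpr hne
  have hml2 : (1 : ℝ) - l2 * l1 ≠ 0 := by rw [mul_comm]; exact hml
  beta_reduce
  rw [show Q l2 / (1 - l1 * l2) = ((l1 - l2) * Q l2) / ((l1 - l2) * (1 - l1 * l2)) from
    (mul_div_mul_left _ _ h12).symm, ← key l2]
  field_simp
  ring
end
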